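/- arXiv:2604.03743 — 3 statements merged into one kernel-verified Lean document; each statement's English description precedes it below -/
import Mathlib

section
/- Let n ≥ 1 and let γ ∈ GL_n(ℂ). The ℝ-linear endomorphism of the real vector space Herm_n(ℂ) of n×n complex Hermitian matrices defined by X ↦ γ* X γ (where γ* denotes the conjugate transpose) has positive determinant. -/
open Matrix

noncomputable section

/-- The real vector space of `n × n` complex Hermitian matrices, as an ℝ-submodule of the
complex matrices (viewed as a real vector space). -/
def HermMat (n : ℕ) : Submodule ℝ (Matrix (Fin n) (Fin n) ℂ) where
  carrier := { A | Aᴴ = A }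
  add_mem' := by
    intro a b ha hb
    simp only [Set.mem_setOf_eq] at *
    rw [Matrix.conjTranspose_add, ha, hb]
  zero_mem' := by simp
  smul_mem' := by
    intro c a ha
    simp only [Set.mem_setOf_eq] at *
    rw [Matrix.conjTranspose_smul_non_comm]
    · rw [ha]
      ext i j
      simp [mul_comm]
    · intro r
      intro x
      simp [Complex.real_smul, mul_comm]
  
/-- The ℝ-linear endomorphism `X ↦ γ* X γ` of the space of Hermitian matrices, where `γ*`
is the conjugate transpose. -/
def congrHerm (n : ℕ) (g : Matrix (Fin n) (Fin n) ℂ) : HermMat n →ₗ[ℝ] HermMat n where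
  toFun X := ⟨gᴴ * X.1 * g, by
    have hX : (X.1)ᴴ = X.1 := X.2
    show (gᴴ * X.1 * g)ᴴ = gᴴ * X.1 * g
    rw [Matrix.conjTranspose_mul, Matrix.conjTranspose_mul, Matrix.conjTranspose_conjTranspose,
      hX, Matrix.mul_assoc]⟩
  map_add' X Y := by
    ext1
    show gᴴ * (X.1 + Y.1) * g = gᴴ * X.1 * g + gᴴ * Y.1 * g
    rw [Matrix.mul_add, Matrix.add_mul]
  map_smul' c X := by
    ext1
    show gᴴ * (c • X.1) * g = c • (gᴴ * X.1 * g)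
    rw [Matrix.mul_smul, Matrix.smul_mul]

/-!
The map `g ↦ det (X ↦ gᴴ X g)` is continuous and multiplicative, so it does not vanish on invertible
matrices. The affine family `1 - z • (1 - γ)`, `z ∈ ℂ`, joins `1` to `γ` and is singular only where
`z⁻¹` is an eigenvalue of `1 - γ`: at finitely many points. Their complement in `ℂ ≅ ℝ²` is connected,
so the determinant keeps the sign it has at `z = 0`, where it equals `1`.
-/

lemma Matrix.finite_setOf_not_isUnit_one_sub_smul {ι K : Type*} [Fintype ι] [DecidableEq ι]
    [Field K] (A : Matrix ι ι K) : {z : K | ¬IsUnit (1 - z • A)}.Finite := by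
  refine ((Matrix.finite_spectrum A).image Inv.inv).subset fun z hz => ⟨z⁻¹, ?_, inv_inv z⟩
  have hz0 : z ≠ 0 := by
    rintro rfl
    simp at hz
  have h : 1 - z • A = z • (z⁻¹ • (1 : Matrix ι ι K) - A) := by
    rw [smul_sub, smul_smul, mul_inv_cancel₀ hz0, one_smul]
  rw [spectrum.mem_iff, Algebra.algebraMap_eq_smul_one]
  intro hunit
  apply hz
  rw [h]
  exact (isUnit_smul_iff (Units.mk0 z hz0) _).mpr hunit

lemma IsPreconnected.pos_of_forall_ne_zero {α : Type*} [TopologicalSpace α] {s : Set α}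
    (hs : IsPreconnected s) {f : α → ℝ} (hf : ContinuousOn f s) (hne : ∀ x ∈ s, f x ≠ 0)
    {a b : α} (ha : a ∈ s) (hb : b ∈ s) (hfa : 0 < f a) : 0 < f b := by
  by_contra! hfb
  obtain ⟨c, hc, hfc⟩ := hs.intermediate_value hb ha hf ⟨hfb, hfa.le⟩
  exact hne c hc hfc

section congrHerm

variable {n : ℕ}

lemma congrHerm_mul (g h : Matrix (Fin n) (Fin n) ℂ) :
    congrHerm n (g * h) = (congrHerm n h).comp (congrHerm n g) := by
  refine LinearMap.ext fun X => Subtype.ext ?_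
  show (g * h)ᴴ * X.1 * (g * h) = hᴴ * (gᴴ * X.1 * g) * h
  rw [conjTranspose_mul]
  noncomm_ring

lemma congrHerm_one : congrHerm n 1 = LinearMap.id :=
  LinearMap.ext fun X => Subtype.ext <| by simp [congrHerm]

lemma det_congrHerm_mul (g h : Matrix (Fin n) (Fin n) ℂ) :
    LinearMap.det (congrHerm n (g * h)) =
      LinearMap.det (congrHerm n g) * LinearMap.det (congrHerm n h) := by
  rw [congrHerm_mul, LinearMap.det_comp, mul_comm]

lemma det_congrHerm_ne_zero {g : Matrix (Fin n) (Fin n) ℂ} (hg : IsUnit g) :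
    LinearMap.det (congrHerm n g) ≠ 0 := by
  obtain ⟨u, rfl⟩ := hg
  refine left_ne_zero_of_mul_eq_one (b := LinearMap.det (congrHerm n ↑u⁻¹)) ?_
  rw [← det_congrHerm_mul, Units.mul_inv, congrHerm_one, LinearMap.det_id]

lemma continuous_det_congrHerm :
    Continuous fun g : Matrix (Fin n) (Fin n) ℂ => LinearMap.det (congrHerm n g) := by
  let b := Module.finBasis ℝ (HermMat n)
  simp_rw [← LinearMap.det_toMatrix b]
  refine Continuous.matrix_det (continuous_matrix fun i j => ?_)
  simp only [LinearMap.toMatrix_apply]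
  exact (LinearMap.continuous_of_finiteDimensional (b.coord i)).comp <|
    ((continuous_id.matrix_conjTranspose.matrix_mul continuous_const).matrix_mul
      continuous_id).subtype_mk _

end congrHerm

theorem statement2_general (n : ℕ) (γ : GL (Fin n) ℂ) :
    0 < LinearMap.det (congrHerm n (γ : Matrix (Fin n) (Fin n) ℂ)) := by
  set A : Matrix (Fin n) (Fin n) ℂ := 1 - γ
  set S : Set ℂ := {z | ¬IsUnit (1 - z • A)}ᶜ
  have hS : IsPreconnected S :=
    ((Matrix.finite_setOf_not_isUnit_one_sub_smul A).countable.isPathConnected_compl_of_one_lt_rank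
      (by simp [Complex.rank_real_complex])).isConnected.isPreconnected
  have h0 : (0 : ℂ) ∈ S := by simp [S]
  have h1 : (1 : ℂ) ∈ S := by simp [S, A]
  have hpos := hS.pos_of_forall_ne_zero
    (continuous_det_congrHerm.comp (by fun_prop)).continuousOn
    (fun z hz => det_congrHerm_ne_zero (not_not.mp hz)) h0 h1 (by simp [congrHerm_one])
  simpa [A] using hpos

/-- For `n ≥ 1` and `γ ∈ GL_n(ℂ)`, the ℝ-linear endomorphism `X ↦ γ* X γ`
of the real vector space of `n × n` complex Hermitian matrices has positive determinant. -/
theorem statement2 (n : ℕ) (hn : 1 ≤ n) (γ : GL (Fin n) ℂ) :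
    0 < LinearMap.det (congrHerm n (γ : Matrix (Fin n) (Fin n) ℂ)) :=
  statement2_general n γ
end
end

section
/- Let n ≥ 1 and let h, h' be neighbouring perfect forms in Sym_n(ℝ), with τ = D(h) ∩ D(h'). Then every matrix Q lying in the relative interior of τ (the interior of τ taken inside the ℝ-linear span of τ) is positive definite. -/
open Matrix

noncomputable section

/-- The real vector space of `n × n` real symmetric matrices, as a submodule of matrices. -/
def SymMat (n : ℕ) : Submodule ℝ (Matrix (Fin n) (Fin n) ℝ) where
  carrier := { A | Aᵀ = A }
  add_mem' := by
    intro a b ha hb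
    simp only [Set.mem_setOf_eq] at *
    rw [Matrix.transpose_add, ha, hb]
  zero_mem' := by simp
  smul_mem' := by
    intro c a ha
    simp only [Set.mem_setOf_eq] at *
    rw [Matrix.transpose_smul, ha]

/-- The ℝ-linear endomorphism `X ↦ gᵀ X g` of the space of symmetric matrices. -/
def congrSym (n : ℕ) (g : Matrix (Fin n) (Fin n) ℝ) : SymMat n →ₗ[ℝ] SymMat n where
  toFun X := ⟨gᵀ * X.1 * g, by
    have hX : (X.1)ᵀ = X.1 := X.2
    show (gᵀ * X.1 * g)ᵀ = gᵀ * X.1 * g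
    rw [Matrix.transpose_mul, Matrix.transpose_mul, Matrix.transpose_transpose, hX,
      Matrix.mul_assoc]⟩
  map_add' X Y := by
    ext1
    show gᵀ * (X.1 + Y.1) * g = gᵀ * X.1 * g + gᵀ * Y.1 * g
    rw [Matrix.mul_add, Matrix.add_mul]
  map_smul' c X := by
    ext1
    show gᵀ * (c • X.1) * g = c • (gᵀ * X.1 * g)
    rw [Matrix.mul_smul, Matrix.smul_mul]

/-- The real matrix obtained from an integer matrix. -/
def realMat {n : ℕ} (g : Matrix (Fin n) (Fin n) ℤ) : Matrix (Fin n) (Fin n) ℝ :=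
  g.map (Int.cast : ℤ → ℝ)

/-- The action of `GL n ℤ` on symmetric matrices: `γ · X = (γ⁻¹)ᵀ X γ⁻¹`. -/
def intAct (n : ℕ) (γ : GL (Fin n) ℤ) : SymMat n →ₗ[ℝ] SymMat n :=
  congrSym n (realMat ((γ⁻¹ : GL (Fin n) ℤ) : Matrix (Fin n) (Fin n) ℤ))

lemma realMat_mul {n : ℕ} (A B : Matrix (Fin n) (Fin n) ℤ) :
    realMat (A * B) = realMat A * realMat B := by
  simpa [realMat] using Matrix.map_mul (L := A) (M := B) (f := Int.castRingHom ℝ)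

lemma realMat_one {n : ℕ} : realMat (1 : Matrix (Fin n) (Fin n) ℤ) = 1 := by
  simpa [realMat] using Matrix.map_one (Int.cast : ℤ → ℝ) Int.cast_zero Int.cast_one

lemma intAct_one (n : ℕ) : intAct n 1 = LinearMap.id := by
  unfold intAct congrSym
  ext X
  simp [realMat_one]

lemma intAct_mul (n : ℕ) (g h : GL (Fin n) ℤ) :
    intAct n (g * h) = (intAct n g).comp (intAct n h) := by
  unfold intAct congrSym
  ext X
  simp [_root_.mul_inv_rev, realMat_mul, Matrix.transpose_mul, Matrix.mul_assoc]

/-- The action of `GL n ℤ` on subsets of symmetric matrices. -/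
def actSet (n : ℕ) (γ : GL (Fin n) ℤ) (S : Set (SymMat n)) : Set (SymMat n) :=
  (intAct n γ) '' S

lemma actSet_one (n : ℕ) (S : Set (SymMat n)) : actSet n 1 S = S := by
  simp [actSet, intAct_one]

lemma actSet_mul (n : ℕ) (g h : GL (Fin n) ℤ) (S : Set (SymMat n)) :
    actSet n (g * h) S = actSet n g (actSet n h S) := by
  rw [actSet, actSet, actSet, intAct_mul, ← Set.image_comp]; rfl

/-- The setwise stabilizer of `S` in the subgroup `Γ ≤ GL n ℤ`. -/
def stab (n : ℕ) (Γ : Subgroup (GL (Fin n) ℤ)) (S : Set (SymMat n)) : Subgroup (GL (Fin n) ℤ) where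
  carrier := { g | g ∈ Γ ∧ actSet n g S = S }
  one_mem' := ⟨Γ.one_mem, actSet_one n S⟩
  mul_mem' := by
    rintro a b ⟨haΓ, ha⟩ ⟨hbΓ, hb⟩
    exact ⟨Γ.mul_mem haΓ hbΓ, by rw [actSet_mul, hb, ha]⟩
  inv_mem' := by
    rintro a ⟨haΓ, ha⟩
    refine ⟨Γ.inv_mem haΓ, ?_⟩
    conv_lhs => rw [← ha]
    rw [← actSet_mul, inv_mul_cancel, actSet_one]
/-- The value `xᵀ h x` of a real quadratic form at an integer vector. -/
def intQuad (n : ℕ) (h : Matrix (Fin n) (Fin n) ℝ) (x : Fin n → ℤ) : ℝ :=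
  (fun i => (x i : ℝ)) ⬝ᵥ h.mulVec (fun i => (x i : ℝ))

/-- The set of minimal vectors of `h`: the nonzero integer vectors achieving the minimum
of `h` over nonzero integer vectors. -/
def minVecs (n : ℕ) (h : Matrix (Fin n) (Fin n) ℝ) : Set (Fin n → ℤ) :=
  { x | x ≠ 0 ∧ ∀ y : Fin n → ℤ, y ≠ 0 → intQuad n h x ≤ intQuad n h y }

/-- The symmetric rank-one matrix `x xᵀ` associated with an integer vector `x`. -/
def rankOneSym (n : ℕ) (x : Fin n → ℤ) : SymMat n :=
  ⟨Matrix.vecMulVec (fun i => (x i : ℝ)) (fun i => (x i : ℝ)), by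
    show (Matrix.vecMulVec _ _)ᵀ = _
    ext i j
    simp [Matrix.vecMulVec, mul_comm]⟩

/-- A positive definite form `h` is perfect if the rank-one matrices `x xᵀ`, for `x` a
minimal vector of `h`, span the space of symmetric matrices. -/
def IsPerfect (n : ℕ) (h : Matrix (Fin n) (Fin n) ℝ) : Prop :=
  h.PosDef ∧ Submodule.span ℝ (rankOneSym n '' minVecs n h) = ⊤

/-- The Voronoi domain of `h`: all nonnegative real linear combinations of the matrices
`x xᵀ` for `x` a minimal vector of `h`. -/
def VorDom (n : ℕ) (h : Matrix (Fin n) (Fin n) ℝ) : Set (SymMat n) :=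
  { M | ∃ (s : Finset (Fin n → ℤ)) (c : (Fin n → ℤ) → ℝ),
      (∀ x ∈ s, x ∈ minVecs n h) ∧ (∀ x ∈ s, 0 ≤ c x) ∧
      M = ∑ x ∈ s, c x • rankOneSym n x }

/-- `τ` is a facet of the convex cone `C`: an extreme subset whose ℝ-linear span is a
hyperplane (codimension-one subspace). -/
def IsFacetOf (n : ℕ) (C τ : Set (SymMat n)) : Prop :=
  IsExtreme ℝ C τ ∧
    Module.finrank ℝ (Submodule.span ℝ τ) + 1 = Module.finrank ℝ (SymMat n)

/-- Two perfect forms are neighbours if their (distinct) Voronoi domains intersect in a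
common facet. -/
def Neighbours (n : ℕ) (h h' : Matrix (Fin n) (Fin n) ℝ) : Prop :=
  IsPerfect n h ∧ IsPerfect n h' ∧ VorDom n h ≠ VorDom n h' ∧
    IsFacetOf n (VorDom n h) (VorDom n h ∩ VorDom n h') ∧
    IsFacetOf n (VorDom n h') (VorDom n h ∩ VorDom n h')

/-- Standing assumption (a theorem of Voronoi reduction theory): every facet of the
Voronoi domain of a perfect form is contained in exactly two Voronoi domains of perfect
forms, and is their intersection. -/
def StandingAssumption (n : ℕ) : Prop :=
  ∀ h : Matrix (Fin n) (Fin n) ℝ, IsPerfect n h →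
    ∀ τ : Set (SymMat n), IsFacetOf n (VorDom n h) τ →
      ∃ h' : Matrix (Fin n) (Fin n) ℝ, IsPerfect n h' ∧ VorDom n h' ≠ VorDom n h ∧
        τ = VorDom n h ∩ VorDom n h' ∧
        ∀ h'' : Matrix (Fin n) (Fin n) ℝ, IsPerfect n h'' → τ ⊆ VorDom n h'' →
          VorDom n h'' = VorDom n h ∨ VorDom n h'' = VorDom n h'

/-!
Every element of `τ = D(h) ∩ D(h')` is positive semidefinite, being a nonnegative combination
of matrices `x xᵀ`. Suppose `vᵀ Q v = 0` with `v ≠ 0`. The functional `φ : M ↦ vᵀ M v` is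
nonnegative on `τ` and vanishes at the relative interior point `Q`, so it vanishes on `τ`; since
`τ` spans a hyperplane, `span τ = ker φ`. Perfection gives minimal vectors `x` of `h` and `x'` of
`h'` with `φ(x xᵀ), φ(x' x'ᵀ) > 0`, so `x xᵀ - c x' x'ᵀ ∈ ker φ = span τ` for some `c > 0`, and
`Q + ε (x xᵀ - c x' x'ᵀ) ∈ τ` for small `ε > 0`. Adding `ε c x' x'ᵀ` shows that `Q + ε x xᵀ`
lies in `D(h')`, and it lies in `D(h)` anyway; so it lies in `τ`, where `φ` vanishes, yet
`φ(Q + ε x xᵀ) = ε φ(x xᵀ) > 0`.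
-/

section IntrinsicInterior

variable {V : Type*} [AddCommGroup V] [Module ℝ V] [TopologicalSpace V]
  [IsTopologicalAddGroup V] [ContinuousSMul ℝ V] {s : Set V} {x : V}

theorem exists_pos_add_smul_mem_of_mem_intrinsicInterior (hx : x ∈ intrinsicInterior ℝ s)
    {d : V} (hd : d ∈ vectorSpan ℝ s) : ∃ ε : ℝ, 0 < ε ∧ x + ε • d ∈ s := by
  obtain ⟨y, hy, rfl⟩ := hx
  have hline (t : ℝ) : (y : V) + t • d ∈ affineSpan ℝ s := by
    simpa [vadd_eq_add, add_comm] using AffineSubspace.vadd_mem_of_mem_direction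
      (Submodule.smul_mem _ t (direction_affineSpan ℝ s ▸ hd)) y.2
  let f : ℝ → affineSpan ℝ s := fun t => ⟨y + t • d, hline t⟩
  have hf : Continuous f := by fun_prop
  have hnear : ∀ᶠ t in nhds 0, f t ∈ interior ((↑) ⁻¹' s) :=
    hf.continuousAt.preimage_mem_nhds (isOpen_interior.mem_nhds (by simpa [f] using hy))
  obtain ⟨ε, hε, hεs⟩ := ((hnear.filter_mono nhdsWithin_le_nhds).and self_mem_nhdsWithin).exists
    (f := nhdsWithin 0 (Set.Ioi 0))
  exact ⟨ε, hεs, (interior_subset hε : f ε ∈ ((↑) ⁻¹' s : Set (affineSpan ℝ s)))⟩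

theorem vectorSpan_le_ker_of_nonneg_of_mem_intrinsicInterior {φ : V →ₗ[ℝ] ℝ}
    (hφs : ∀ y ∈ s, 0 ≤ φ y) (hx : x ∈ intrinsicInterior ℝ s) (hφx : φ x = 0) :
    vectorSpan ℝ s ≤ LinearMap.ker φ := by
  have hvanish : ∀ y ∈ s, φ y = 0 := by
    intro y hy
    obtain ⟨ε, hε, hεs⟩ := exists_pos_add_smul_mem_of_mem_intrinsicInterior hx
      (vsub_mem_vectorSpan ℝ (intrinsicInterior_subset hx) hy)
    have := hφs _ hεs
    simp only [vsub_eq_sub, map_add, LinearMap.map_smul, map_sub, hφx, smul_eq_mul] at this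
    nlinarith [hφs y hy]
  rw [vectorSpan_def, Submodule.span_le]
  rintro _ ⟨a, ha, b, hb, rfl⟩
  simp [hvanish a ha, hvanish b hb]

end IntrinsicInterior

theorem vectorSpan_eq_span_of_zero_mem {k V : Type*} [Ring k] [AddCommGroup V] [Module k V]
    {s : Set V} (hs : 0 ∈ s) : vectorSpan k s = Submodule.span k s := by
  simp [vectorSpan_eq_span_vsub_set_right k hs]

section Voronoi

variable {n : ℕ}

def quadFunctional (n : ℕ) (v : Fin n → ℝ) : SymMat n →ₗ[ℝ] ℝ where
  toFun M := v ⬝ᵥ (M : Matrix (Fin n) (Fin n) ℝ) *ᵥ v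
  map_add' M N := by simp [Matrix.add_mulVec, dotProduct_add]
  map_smul' c M := by simp [Matrix.smul_mulVec, dotProduct_smul]

theorem quadFunctional_apply (v : Fin n → ℝ) (M : SymMat n) :
    quadFunctional n v M = v ⬝ᵥ (M : Matrix (Fin n) (Fin n) ℝ) *ᵥ v := rfl

theorem quadFunctional_rankOneSym (v : Fin n → ℝ) (x : Fin n → ℤ) :
    quadFunctional n v (rankOneSym n x) = (v ⬝ᵥ fun i => (x i : ℝ)) ^ 2 := by
  simp [quadFunctional_apply, rankOneSym, vecMulVec_mulVec, dotProduct_comm, sq]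

theorem quadFunctional_ne_zero {v : Fin n → ℝ} (hv : v ≠ 0) : quadFunctional n v ≠ 0 := by
  intro h0
  have h1 := LinearMap.congr_fun h0 ⟨1, transpose_one⟩
  simp only [quadFunctional_apply, LinearMap.zero_apply, one_mulVec] at h1
  exact hv (dotProduct_self_eq_zero.mp h1)

theorem quadFunctional_nonneg_of_mem_vorDom {h : Matrix (Fin n) (Fin n) ℝ} (v : Fin n → ℝ)
    {M : SymMat n} (hM : M ∈ VorDom n h) : 0 ≤ quadFunctional n v M := by
  obtain ⟨s, c, -, hc, rfl⟩ := hM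
  simp only [map_sum, LinearMap.map_smul, quadFunctional_rankOneSym, smul_eq_mul]
  exact Finset.sum_nonneg fun x hx => mul_nonneg (hc x hx) (sq_nonneg _)

theorem zero_mem_vorDom (h : Matrix (Fin n) (Fin n) ℝ) : (0 : SymMat n) ∈ VorDom n h :=
  ⟨∅, 0, by simp, by simp, by simp⟩

theorem add_smul_rankOneSym_mem_vorDom {h : Matrix (Fin n) (Fin n) ℝ} {M : SymMat n}
    (hM : M ∈ VorDom n h) {x : Fin n → ℤ} (hx : x ∈ minVecs n h) {t : ℝ} (ht : 0 ≤ t) :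
    M + t • rankOneSym n x ∈ VorDom n h := by
  classical
  obtain ⟨s, c, hs, hc, rfl⟩ := hM
  refine ⟨insert x s, fun y => (if y ∈ s then c y else 0) + if y = x then t else 0,
    ?_, fun y _ => ?_, ?_⟩
  · simpa [Finset.forall_mem_insert] using ⟨hx, hs⟩
  · dsimp only
    by_cases hys : y ∈ s
    · have := hc y hys
      split_ifs <;> linarith
    · split_ifs <;> linarith
  · simp only [add_smul, ite_smul, zero_smul, Finset.sum_add_distrib, Finset.sum_ite_mem,
      Finset.sum_ite_eq', Finset.mem_insert_self, if_true,
      Finset.inter_eq_right.mpr (Finset.subset_insert x s)]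

theorem exists_mem_minVecs_quadFunctional_pos {h : Matrix (Fin n) (Fin n) ℝ}
    (hspan : Submodule.span ℝ (rankOneSym n '' minVecs n h) = ⊤) {v : Fin n → ℝ} (hv : v ≠ 0) :
    ∃ x ∈ minVecs n h, 0 < quadFunctional n v (rankOneSym n x) := by
  by_contra! hle
  refine quadFunctional_ne_zero hv (LinearMap.ker_eq_top.mp (top_le_iff.mp ?_))
  rw [← hspan, Submodule.span_le]
  rintro _ ⟨x, hx, rfl⟩
  exact le_antisymm (hle x hx) (by simp [quadFunctional_rankOneSym, sq_nonneg])

theorem vectorSpan_inter_vorDom_ne_ker {h h' : Matrix (Fin n) (Fin n) ℝ}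
    (hspan : Submodule.span ℝ (rankOneSym n '' minVecs n h) = ⊤)
    (hspan' : Submodule.span ℝ (rankOneSym n '' minVecs n h') = ⊤)
    {v : Fin n → ℝ} (hv : v ≠ 0) {Q : SymMat n}
    (hQ : Q ∈ intrinsicInterior ℝ (VorDom n h ∩ VorDom n h')) :
    vectorSpan ℝ (VorDom n h ∩ VorDom n h') ≠ LinearMap.ker (quadFunctional n v) := by
  intro hker
  set φ := quadFunctional n v
  have hQτ := intrinsicInterior_subset hQ
  have hvanish : ∀ M ∈ VorDom n h ∩ VorDom n h', φ M = 0 := fun M hM => by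
    simpa [← LinearMap.mem_ker, ← hker] using
      vsub_mem_vectorSpan ℝ hM ⟨zero_mem_vorDom h, zero_mem_vorDom h'⟩
  obtain ⟨x, hx, hxpos⟩ := exists_mem_minVecs_quadFunctional_pos hspan hv
  obtain ⟨x', hx', hx'pos⟩ := exists_mem_minVecs_quadFunctional_pos hspan' hv
  set A := rankOneSym n x
  set A' := rankOneSym n x'
  set c := φ A / φ A'
  have hd : A - c • A' ∈ vectorSpan ℝ (VorDom n h ∩ VorDom n h') := by
    rw [hker, LinearMap.mem_ker, map_sub, LinearMap.map_smul, smul_eq_mul,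
      div_mul_cancel₀ _ hx'pos.ne', sub_self]
  obtain ⟨ε, hε, hετ⟩ := exists_pos_add_smul_mem_of_mem_intrinsicInterior hQ hd
  have hmem : Q + ε • A ∈ VorDom n h ∩ VorDom n h' := by
    refine ⟨add_smul_rankOneSym_mem_vorDom hQτ.1 hx hε.le, ?_⟩
    convert add_smul_rankOneSym_mem_vorDom hετ.2 hx'
      (mul_nonneg hε.le (div_pos hxpos hx'pos).le) using 1
    module
  have := hvanish _ hmem
  rw [map_add, LinearMap.map_smul, hvanish Q hQτ, smul_eq_mul, zero_add] at this
  exact (mul_pos hε hxpos).ne' this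

end Voronoi

theorem statement4_general (n : ℕ) (h h' : Matrix (Fin n) (Fin n) ℝ)
    (hnb : Neighbours n h h') (Q : SymMat n)
    (hQ : Q ∈ intrinsicInterior ℝ (VorDom n h ∩ VorDom n h')) :
    (Q : Matrix (Fin n) (Fin n) ℝ).PosDef := by
  obtain ⟨hp, hp', -, ⟨-, hfacet⟩, -⟩ := hnb
  rw [← vectorSpan_eq_span_of_zero_mem (s := VorDom n h ∩ VorDom n h')
    ⟨zero_mem_vorDom h, zero_mem_vorDom h'⟩] at hfacet
  refine posDef_iff_dotProduct_mulVec.mpr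
    ⟨(conjTranspose_eq_transpose_of_trivial _).trans Q.2, fun v hv => ?_⟩
  have hnonneg : ∀ M ∈ VorDom n h ∩ VorDom n h', 0 ≤ quadFunctional n v M :=
    fun M hM => quadFunctional_nonneg_of_mem_vorDom v hM.1
  refine (hnonneg Q (intrinsicInterior_subset hQ)).lt_of_ne' fun hQv => ?_
  refine vectorSpan_inter_vorDom_ne_ker hp.2 hp'.2 hv hQ (Submodule.eq_of_le_of_finrank_eq
    (vectorSpan_le_ker_of_nonneg_of_mem_intrinsicInterior hnonneg hQ hQv) ?_)
  have := Module.Dual.finrank_ker_add_one_of_ne_zero (quadFunctional_ne_zero hv)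
  omega

/-- If `h, h'` are neighbouring perfect forms and `τ = D(h) ∩ D(h')`, then
every matrix in the relative interior of `τ` (interior taken inside the span of `τ`) is
positive definite. -/
theorem statement4 (n : ℕ) (hn : 1 ≤ n) (h h' : Matrix (Fin n) (Fin n) ℝ)
    (hnb : Neighbours n h h') (Q : SymMat n)
    (hQ : Q ∈ intrinsicInterior ℝ (VorDom n h ∩ VorDom n h')) :
    (Q : Matrix (Fin n) (Fin n) ℝ).PosDef :=
  statement4_general n h h' hnb Q hQ
end
end

section
/- Let n ≥ 1, let Γ be a subgroup of GL_n(ℤ), and let h, h' be neighbouring perfect forms with σ = D(h), ρ = D(h'), and τ = σ ∩ ρ. Assume that σ and ρ are not in the same Γ-orbit. Then the setwise stabilizer of τ in Γ equals the intersection of the setwise stabilizers of σ and of ρ: Γ_τ = Γ_σ ∩ Γ_ρ. -/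
open Matrix

noncomputable section

/-! An element `g ∈ Γ` fixing `τ` carries `σ = D(h)` and `ρ = D(h')` onto the Voronoi domains of
the perfect forms `g · h` and `g · h'`, and both of these contain `g · τ = τ`. By the standing
assumption, each of `g · σ` and `g · ρ` is therefore `σ` or `ρ`, and since `σ` and `ρ` lie in
different `Γ`-orbits, `g` fixes both. Conversely `g` acts bijectively, so it commutes with
intersections. -/

variable {n : ℕ}

lemma mem_stab {Γ : Subgroup (GL (Fin n) ℤ)} {S : Set (SymMat n)} {g : GL (Fin n) ℤ} :
    g ∈ stab n Γ S ↔ g ∈ Γ ∧ actSet n g S = S :=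
  Iff.rfl

lemma intAct_inv_apply_intAct (γ : GL (Fin n) ℤ) (X : SymMat n) :
    intAct n γ⁻¹ (intAct n γ X) = X := by
  rw [← LinearMap.comp_apply, ← intAct_mul, inv_mul_cancel, intAct_one, LinearMap.id_apply]

lemma intAct_bijective (γ : GL (Fin n) ℤ) : Function.Bijective (intAct n γ) :=
  Function.bijective_iff_has_inverse.2
    ⟨intAct n γ⁻¹, intAct_inv_apply_intAct γ,
      fun X => by simpa only [inv_inv] using intAct_inv_apply_intAct γ⁻¹ X⟩

lemma actSet_inv_actSet (γ : GL (Fin n) ℤ) (S : Set (SymMat n)) :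
    actSet n γ⁻¹ (actSet n γ S) = S := by
  rw [← actSet_mul, inv_mul_cancel, actSet_one]

lemma actSet_inter (γ : GL (Fin n) ℤ) (S T : Set (SymMat n)) :
    actSet n γ (S ∩ T) = actSet n γ S ∩ actSet n γ T :=
  Set.image_inter (intAct_bijective γ).injective

/-- The action on integer vectors, `x ↦ (γ⁻¹)ᵀ x`, under which `γ · (x xᵀ) = (γ · x) (γ · x)ᵀ`. -/
def vecAct (γ : GL (Fin n) ℤ) : (Fin n → ℤ) ≃ₗ[ℤ] (Fin n → ℤ) :=
  LinearEquiv.ofLinearMap (vecMulLinear (γ⁻¹ : GL (Fin n) ℤ).val) (vecMulLinear γ.val)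
    (LinearMap.ext fun _ => by simp [vecMul_vecMul])
    (LinearMap.ext fun _ => by simp [vecMul_vecMul])

lemma vecAct_apply (γ : GL (Fin n) ℤ) (x : Fin n → ℤ) : vecAct γ x = x ᵥ* (γ⁻¹).val :=
  rfl

lemma castVec_vecMul (x : Fin n → ℤ) (M : Matrix (Fin n) (Fin n) ℤ) :
    (fun i => ((x ᵥ* M) i : ℝ)) = (fun i => (x i : ℝ)) ᵥ* realMat M :=
  funext (RingHom.map_vecMul (Int.castRingHom ℝ) M x)

lemma intAct_rankOneSym (γ : GL (Fin n) ℤ) (x : Fin n → ℤ) :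
    intAct n γ (rankOneSym n x) = rankOneSym n (vecAct γ x) := by
  apply Subtype.ext
  change (realMat (γ⁻¹).val)ᵀ * vecMulVec _ _ * realMat (γ⁻¹).val = vecMulVec _ _
  rw [vecAct_apply, castVec_vecMul, mul_vecMulVec, vecMulVec_mul, mulVec_transpose]

/-- The action on forms for which `D(γ · h) = γ · D(h)`. -/
def formAct (γ : GL (Fin n) ℤ) (h : Matrix (Fin n) (Fin n) ℝ) : Matrix (Fin n) (Fin n) ℝ :=
  realMat γ.val * h * (realMat γ.val)ᵀ

lemma formAct_mul (γ δ : GL (Fin n) ℤ) (h : Matrix (Fin n) (Fin n) ℝ) :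
    formAct (γ * δ) h = formAct γ (formAct δ h) := by
  simp only [formAct, Units.val_mul, realMat_mul, transpose_mul, Matrix.mul_assoc]

lemma formAct_one (h : Matrix (Fin n) (Fin n) ℝ) : formAct 1 h = h := by
  simp [formAct, realMat_one]

lemma intQuad_formAct (γ : GL (Fin n) ℤ) (h : Matrix (Fin n) (Fin n) ℝ) (x : Fin n → ℤ) :
    intQuad n (formAct γ h) (vecAct γ x) = intQuad n h x := by
  have hx : (fun i => ((vecAct γ x) i : ℝ)) ᵥ* realMat γ.val = fun i => (x i : ℝ) := by
    rw [← castVec_vecMul, vecAct_apply, vecMul_vecMul, Units.inv_mul, vecMul_one]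
  rw [intQuad, intQuad, formAct, ← mulVec_mulVec, ← mulVec_mulVec, dotProduct_mulVec,
    mulVec_transpose, hx]

lemma minVecs_eq_image_of_intQuad {h k : Matrix (Fin n) (Fin n) ℝ}
    (e : (Fin n → ℤ) ≃ₗ[ℤ] (Fin n → ℤ)) (he : ∀ x, intQuad n k (e x) = intQuad n h x) :
    minVecs n k = e '' minVecs n h := by
  ext y
  obtain ⟨x, rfl⟩ := e.surjective y
  rw [e.image_eq_preimage_symm, Set.mem_preimage, e.symm_apply_apply]
  simp only [minVecs, Set.mem_ofPred_eq]
  rw [← e.toEquiv.forall_congr_right]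
  simp only [LinearEquiv.coe_toEquiv, ne_eq, e.map_eq_zero_iff, he]

lemma minVecs_formAct (γ : GL (Fin n) ℤ) (h : Matrix (Fin n) (Fin n) ℝ) :
    minVecs n (formAct γ h) = vecAct γ '' minVecs n h :=
  minVecs_eq_image_of_intQuad (vecAct γ) (intQuad_formAct γ h)

lemma posDef_formAct {h : Matrix (Fin n) (Fin n) ℝ} (hh : h.PosDef) (γ : GL (Fin n) ℤ) :
    (formAct γ h).PosDef := by
  have hγ : IsUnit (realMat γ.val) := (GeneralLinearGroup.map (Int.castRingHom ℝ) γ).isUnit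
  simpa [formAct, conjTranspose_eq_transpose_of_trivial] using
    hh.mul_mul_conjTranspose_same (vecMul_injective_of_isUnit hγ)

lemma isPerfect_formAct {h : Matrix (Fin n) (Fin n) ℝ} (hh : IsPerfect n h) (γ : GL (Fin n) ℤ) :
    IsPerfect n (formAct γ h) := by
  refine ⟨posDef_formAct hh.1 γ, ?_⟩
  have himage : rankOneSym n '' minVecs n (formAct γ h) =
      intAct n γ '' (rankOneSym n '' minVecs n h) := by
    simp only [minVecs_formAct, Set.image_image, intAct_rankOneSym]
  rw [himage, Submodule.span_image, hh.2, Submodule.map_top,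
    LinearMap.range_eq_top.2 (intAct_bijective γ).surjective]

lemma actSet_vorDom_subset (γ : GL (Fin n) ℤ) (h : Matrix (Fin n) (Fin n) ℝ) :
    actSet n γ (VorDom n h) ⊆ VorDom n (formAct γ h) := by
  rintro _ ⟨_, ⟨s, c, hs, hc, rfl⟩, rfl⟩
  refine ⟨s.map (vecAct γ).toEquiv.toEmbedding, c ∘ (vecAct γ).symm, ?_, ?_, ?_⟩
  · simp only [Finset.forall_mem_map, minVecs_formAct]
    exact fun x hx => Set.mem_image_of_mem _ (hs x hx)
  · exact Finset.forall_mem_map.2 fun x hx => by simpa using hc x hx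
  · simp [map_sum, Finset.sum_map, intAct_rankOneSym]

lemma actSet_vorDom (γ : GL (Fin n) ℤ) (h : Matrix (Fin n) (Fin n) ℝ) :
    actSet n γ (VorDom n h) = VorDom n (formAct γ h) := by
  refine (actSet_vorDom_subset γ h).antisymm ?_
  calc VorDom n (formAct γ h)
      = actSet n γ (actSet n γ⁻¹ (VorDom n (formAct γ h))) := by
        rw [← actSet_mul, mul_inv_cancel, actSet_one]
    _ ⊆ actSet n γ (VorDom n h) := by
        refine Set.image_mono ?_
        simpa [← formAct_mul, formAct_one] using actSet_vorDom_subset γ⁻¹ (formAct γ h)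

lemma Neighbours.vorDom_eq_or_eq {h h' k : Matrix (Fin n) (Fin n) ℝ}
    (standing : StandingAssumption n) (hnb : Neighbours n h h') (hk : IsPerfect n k)
    (hsub : VorDom n h ∩ VorDom n h' ⊆ VorDom n k) :
    VorDom n k = VorDom n h ∨ VorDom n k = VorDom n h' := by
  obtain ⟨h₂, -, -, -, huniq⟩ := standing h hnb.1 _ hnb.2.2.2.1
  have hD₂ : VorDom n h' = VorDom n h₂ :=
    (huniq h' hnb.2.1 Set.inter_subset_right).resolve_left hnb.2.2.1.symm
  rw [hD₂]
  exact huniq k hk hsub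

lemma Neighbours.actSet_vorDom_eq_or_eq {h h' k : Matrix (Fin n) (Fin n) ℝ}
    (standing : StandingAssumption n) (hnb : Neighbours n h h') (hk : IsPerfect n k)
    (hsub : VorDom n h ∩ VorDom n h' ⊆ VorDom n k) {γ : GL (Fin n) ℤ}
    (hγ : actSet n γ (VorDom n h ∩ VorDom n h') = VorDom n h ∩ VorDom n h') :
    actSet n γ (VorDom n k) = VorDom n h ∨ actSet n γ (VorDom n k) = VorDom n h' := by
  rw [actSet_vorDom]
  refine hnb.vorDom_eq_or_eq standing (isPerfect_formAct hk γ) ?_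
  rw [← actSet_vorDom, ← hγ]
  exact Set.image_mono hsub

theorem statement5_general (n : ℕ) (standing : StandingAssumption n)
    (Γ : Subgroup (GL (Fin n) ℤ)) (h h' : Matrix (Fin n) (Fin n) ℝ)
    (hnb : Neighbours n h h')
    (σ ρ τ : Set (SymMat n)) (hσ : σ = VorDom n h) (hρ : ρ = VorDom n h')
    (hτ : τ = σ ∩ ρ)
    (horb : ¬ ∃ g ∈ Γ, actSet n g σ = ρ) :
    stab n Γ τ = stab n Γ σ ⊓ stab n Γ ρ := by
  subst hσ hρ hτ
  ext g
  simp only [Subgroup.mem_inf, mem_stab]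
  constructor
  · rintro ⟨hgΓ, hgτ⟩
    have hgσ : actSet n g (VorDom n h) = VorDom n h :=
      (hnb.actSet_vorDom_eq_or_eq standing hnb.1 Set.inter_subset_left hgτ).resolve_right
        fun hσρ => horb ⟨g, hgΓ, hσρ⟩
    have hgρ : actSet n g (VorDom n h') = VorDom n h' :=
      (hnb.actSet_vorDom_eq_or_eq standing hnb.2.1 Set.inter_subset_right hgτ).resolve_left
        fun hρσ => horb ⟨g⁻¹, Γ.inv_mem hgΓ, by rw [← hρσ, actSet_inv_actSet]⟩
    exact ⟨⟨hgΓ, hgσ⟩, hgΓ, hgρ⟩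
  · rintro ⟨⟨hgΓ, hgσ⟩, -, hgρ⟩
    exact ⟨hgΓ, by rw [actSet_inter, hgσ, hgρ]⟩

/-- Let `Γ ≤ GL_n(ℤ)` and let `h, h'` be neighbouring perfect forms with
`σ = D(h)`, `ρ = D(h')`, `τ = σ ∩ ρ`, where `σ` and `ρ` are not in the same `Γ`-orbit.
Then the setwise stabilizer of `τ` in `Γ` equals `Γ_σ ∩ Γ_ρ`. -/
theorem statement5 (n : ℕ) (hn : 1 ≤ n) (standing : StandingAssumption n)
    (Γ : Subgroup (GL (Fin n) ℤ)) (h h' : Matrix (Fin n) (Fin n) ℝ)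
    (hnb : Neighbours n h h')
    (σ ρ τ : Set (SymMat n)) (hσ : σ = VorDom n h) (hρ : ρ = VorDom n h')
    (hτ : τ = σ ∩ ρ)
    (horb : ¬ ∃ g ∈ Γ, actSet n g σ = ρ) :
    stab n Γ τ = stab n Γ σ ⊓ stab n Γ ρ :=
  statement5_general n standing Γ h h' hnb σ ρ τ hσ hρ hτ horb
end
end
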